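/- arXiv:2111.06379 — 2 statements merged into one kernel-verified Lean document; each statement's English description precedes it below -/
import Mathlib

section
/- Let A be a Grothendieck abelian category and let I = (I_n)_{n∈ℕ} be a tower (an object of the category of inverse sequences in A). If I is an injective object of the category of towers A^ℕ, then each I_n is injective in A and every structure map I_{n+1} → I_n is a split epimorphism. -/
/-!
Evaluation at `c` has the left adjoint `L_c : Y ↦ (t ↦ ∐_{c ⟶ t} Y)`. When all hom-sets are
finite these coproducts are biproducts, so `L_c` preserves monomorphisms and evaluation therefore
preserves injective objects. For an epimorphism `f : c ⟶ c'`, reindexing along `g ↦ f ≫ g` gives a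
monomorphism `L_{c'} Y ⟶ L_c Y`; extending the transpose of `𝟙 (F c')` along it to an injective
functor `F` produces a section of `F.map f`. In `ℕᵒᵖ` hom-sets are subsingletons and every morphism
is epi.
-/

open CategoryTheory Limits

namespace CategoryTheory

variable {C : Type*} [Category C] {A : Type*} [Category A]

section Coproducts

variable [∀ a b : C, HasCoproductsOfShape (a ⟶ b) A]

theorem evaluationAdjunctionRight_unit_comp_map {c t : C} (Y : A) (g : c ⟶ t) :
    (evaluationAdjunctionRight A c).unit.app Y ≫ ((evaluationLeftAdjoint A c).obj Y).map g =
      Sigma.ι (fun _ => Y) g := by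
  rw [evaluationAdjunctionRight_unit_app, evaluationLeftAdjoint_obj_map]
  exact (Sigma.ι_desc (fun h : c ⟶ c => Sigma.ι (fun _ : c ⟶ t => Y) (h ≫ g))
    (𝟙 c)).trans (congrArg _ (Category.id_comp g))

theorem evaluationAdjunctionRight_unit_comp_map_comp_app {c t : C} {Y : A} {G : C ⥤ A}
    (η : (evaluationLeftAdjoint A c).obj Y ⟶ G) (g : c ⟶ t) :
    (evaluationAdjunctionRight A c).unit.app Y ≫ ((evaluationLeftAdjoint A c).obj Y).map g ≫
      η.app t = (evaluationAdjunctionRight A c).homEquiv Y G η ≫ G.map g := by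
  rw [η.naturality, Adjunction.homEquiv_unit, Category.assoc]
  rfl

/-- The morphism `L_{c'} Y ⟶ L_c Y` reindexing the summands along `g ↦ f ≫ g`. -/
noncomputable def evaluationLeftAdjointPrecomp {c c' : C} (f : c ⟶ c') (Y : A) :
    (evaluationLeftAdjoint A c').obj Y ⟶ (evaluationLeftAdjoint A c).obj Y :=
  ((evaluationAdjunctionRight A c').homEquiv _ _).symm
    ((evaluationAdjunctionRight A c).unit.app Y ≫ ((evaluationLeftAdjoint A c).obj Y).map f)

theorem evaluationAdjunctionRight_homEquiv_precomp {c c' : C} (f : c ⟶ c') (Y : A) :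
    (evaluationAdjunctionRight A c').homEquiv _ _ (evaluationLeftAdjointPrecomp f Y) =
      (evaluationAdjunctionRight A c).unit.app Y ≫ ((evaluationLeftAdjoint A c).obj Y).map f :=
  Equiv.apply_symm_apply _ _

theorem ι_comp_evaluationLeftAdjointPrecomp_app {c c' t : C} (f : c ⟶ c') (Y : A)
    (g : c' ⟶ t) :
    Sigma.ι (fun _ => Y) g ≫ (evaluationLeftAdjointPrecomp f Y).app t =
      Sigma.ι (fun _ => Y) (f ≫ g) := by
  have h := evaluationAdjunctionRight_unit_comp_map_comp_app (evaluationLeftAdjointPrecomp f Y) g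
  rw [evaluationAdjunctionRight_homEquiv_precomp, Category.assoc, ← Functor.map_comp,
    evaluationAdjunctionRight_unit_comp_map, ← Category.assoc,
    evaluationAdjunctionRight_unit_comp_map] at h
  exact h

theorem evaluationAdjunctionRight_homEquiv_precomp_comp {c c' : C} (f : c ⟶ c') {Y : A}
    {F : C ⥤ A} (η : (evaluationLeftAdjoint A c).obj Y ⟶ F) :
    (evaluationAdjunctionRight A c').homEquiv Y F (evaluationLeftAdjointPrecomp f Y ≫ η) =
      (evaluationAdjunctionRight A c).homEquiv Y F η ≫ F.map f := by
  rw [Adjunction.homEquiv_naturality_right, evaluationAdjunctionRight_homEquiv_precomp,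
    Category.assoc]
  exact evaluationAdjunctionRight_unit_comp_map_comp_app η f

end Coproducts

section FiniteHoms

variable [HasZeroMorphisms A] [HasFiniteBiproducts A] [∀ a b : C, Finite (a ⟶ b)]

instance evaluationLeftAdjoint_preservesMonomorphisms (c : C) :
    (evaluationLeftAdjoint A c).PreservesMonomorphisms where
  preserves {X Y} m _ := by
    rw [NatTrans.mono_iff_mono_app']
    intro t
    have h : ((evaluationLeftAdjoint A c).map m).app t = Limits.Sigma.map fun _ : c ⟶ t => m :=
      Sigma.hom_ext _ _ fun g =>
        (Sigma.ι_desc _ _).trans (Sigma.ι_map (fun _ : c ⟶ t => m) g).symm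
    rw [h]
    exact Sigma.map_mono _

instance mono_evaluationLeftAdjointPrecomp {c c' : C} (f : c ⟶ c') [Epi f] (Y : A) :
    Mono (evaluationLeftAdjointPrecomp f Y) := by
  rw [NatTrans.mono_iff_mono_app']
  intro t
  have h : (evaluationLeftAdjointPrecomp f Y).app t =
      Sigma.map' (fun g : c' ⟶ t => f ≫ g) fun _ => 𝟙 Y :=
    Sigma.hom_ext (f := fun _ : c' ⟶ t => Y) _ _ fun g =>
      (ι_comp_evaluationLeftAdjointPrecomp_app f Y g).trans
        ((Sigma.ι_comp_map' (f := fun _ : c' ⟶ t => Y) (g := fun _ : c ⟶ t => Y)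
          (fun g => f ≫ g) (fun _ => 𝟙 Y) g).trans (Category.id_comp _)).symm
  rw [h]
  exact MonoCoprod.mono_map'_of_injective _ _ fun _ _ hg => (cancel_epi f).1 hg

instance evaluation_preservesInjectiveObjects (c : C) :
    ((evaluation C A).obj c).PreservesInjectiveObjects :=
  Functor.preservesInjectiveObjects_of_adjunction_of_preservesMonomorphisms
    (evaluationAdjunctionRight A c)

theorem Functor.isSplitEpi_map_of_injective {F : C ⥤ A} (hF : Injective F) {c c' : C}
    (f : c ⟶ c') [Epi f] : IsSplitEpi (F.map f) := by
  obtain ⟨η, hη⟩ := hF.factors ((evaluationAdjunctionRight A c').homEquiv _ _ |>.symm (𝟙 _))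
    (evaluationLeftAdjointPrecomp f (F.obj c'))
  refine ⟨⟨(evaluationAdjunctionRight A c).homEquiv _ _ η, ?_⟩⟩
  rw [← evaluationAdjunctionRight_homEquiv_precomp_comp, hη]
  exact Equiv.apply_symm_apply _ _

end FiniteHoms

end CategoryTheory

theorem stmt_0_general (A : Type*) [Category A] [Abelian A]
    (I : ℕᵒᵖ ⥤ A) (hI : Injective I) :
    (∀ n : ℕ, Injective (I.obj (Opposite.op n))) ∧
    (∀ n : ℕ, IsSplitEpi (I.map (homOfLE (Nat.le_succ n)).op)) := by
  have := Abelian.hasFiniteBiproducts (C := A)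
  exact ⟨fun n => ((evaluation ℕᵒᵖ A).obj (Opposite.op n)).injective_obj_of_injective hI,
    fun _ => Functor.isSplitEpi_map_of_injective hI _⟩

/-- If `A` is a Grothendieck abelian category (abelian, cocomplete, AB5, with a separator)
and a tower `I : ℕᵒᵖ ⥤ A` is an injective object of the category of towers, then each `I_n`
is injective in `A` and each structure map `I_{n+1} → I_n` is a split epimorphism. -/
theorem stmt_0 (A : Type*) [Category A] [Abelian A] [HasColimits A] [AB5 A] [HasSeparator A]
    (I : ℕᵒᵖ ⥤ A) (hI : Injective I) :
    (∀ n : ℕ, Injective (I.obj (Opposite.op n))) ∧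
    (∀ n : ℕ, IsSplitEpi (I.map (homOfLE (Nat.le_succ n)).op)) :=
  stmt_0_general A I hI
end

section
/- Let p be an odd prime, let ζ ∈ ℤ_p^× be a (p−1)-st root of unity whose reduction mod p generates (ℤ/p)^×, and set g = ζ(1+p). For a nonzero integer k divisible by p−1, write k = (p−1)p^n m with p ∤ m. Then the ℤ_p-linear map x ↦ (1 − g^k)x on ℤ_p is injective with cokernel isomorphic to ℤ/p^{n+1}; and if (p−1) ∤ k, this map is bijective. -/
/-!
As `ζ ^ (p - 1) = 1`, for `(p - 1) ∣ k` we have `g ^ k = (1 + p) ^ k`, and lifting the exponent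
gives `v_p((1 + p) ^ k - 1) = v_p(k) + 1 = n + 1`; so `1 - g ^ k` is `p ^ (n + 1)` times a unit of
`ℤ_p`, and `ℤ_p / p ^ (n + 1) ≅ ℤ / p ^ (n + 1)`. If `(p - 1) ∤ k`, then `g ^ k ≡ ζ ^ k ≢ 1 (mod p)`
because `ζ` reduces to a generator of `(ℤ/p)ˣ`, so `1 - g ^ k` is a unit.
-/

theorem associated_one_sub_inv {R : Type*} [CommRing R] (u : Rˣ) :
    Associated (1 - (↑u⁻¹ : R)) (1 - u) :=
  ⟨-u, by rw [Units.val_neg]; linear_combination u.inv_mul⟩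

theorem padicValNat_add_one_pow_sub_one {p : ℕ} [Fact p.Prime] (hp : Odd p) {K : ℕ}
    (hK : K ≠ 0) : padicValNat p ((p + 1) ^ K - 1) = padicValNat p K + 1 := by
  have hp1 := (Fact.out : p.Prime).one_lt
  have h := padicValNat.pow_sub_pow (x := p + 1) (y := 1) hp (by omega) (by simp)
    (by simp [(Fact.out : p.Prime).ne_one]) hK
  rw [one_pow, Nat.add_sub_cancel, padicValNat.self hp1] at h
  omega

theorem padicValInt_sub_one_mul_pow_mul {p : ℕ} [Fact p.Prime] (n : ℕ) {m : ℤ}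
    (hm : ¬ (p : ℤ) ∣ m) : padicValInt p (((p : ℤ) - 1) * p ^ n * m) = n := by
  have hp2 := (Fact.out : p.Prime).two_le
  have hp1 : ¬ p ∣ p - 1 := Nat.not_dvd_of_pos_of_lt (by omega) (by omega)
  have hN : (p - 1) * p ^ n ≠ 0 := mul_ne_zero (by omega) (NeZero.ne _)
  rw [← Nat.cast_pred (by omega : 0 < p), ← Nat.cast_pow, ← Nat.cast_mul,
    padicValInt.mul (Nat.cast_ne_zero.mpr hN) (by rintro rfl; exact hm (dvd_zero _)),
    padicValInt.eq_zero_of_not_dvd hm, padicValInt.of_nat,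
    padicValNat.mul (by omega) (NeZero.ne _), padicValNat.eq_zero_of_not_dvd hp1,
    padicValNat.prime_pow]
  simp

namespace PadicInt

variable {p : ℕ} [Fact p.Prime]

theorem associated_pow_valuation {x : ℤ_[p]} (hx : x ≠ 0) :
    Associated ((p : ℤ_[p]) ^ x.valuation) x :=
  ⟨unitCoeff hx, by rw [mul_comm, ← unitCoeff_spec hx]⟩

theorem valuation_natCast (n : ℕ) : (n : ℤ_[p]).valuation = padicValNat p n := by
  have h := valuation_coe (n : ℤ_[p])
  rw [coe_natCast, Padic.valuation_natCast] at h
  omega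

theorem associated_one_sub_one_add_pow (hp : Odd p) {K : ℕ} (hK : K ≠ 0) :
    Associated (1 - (1 + p : ℤ_[p]) ^ K) ((p : ℤ_[p]) ^ (padicValNat p K + 1)) := by
  have hN : (p + 1) ^ K - 1 ≠ 0 :=
    Nat.sub_ne_zero_of_lt (Nat.one_lt_pow hK (by have := (Fact.out : p.Prime).pos; omega))
  have hcast : (((p + 1) ^ K - 1 : ℕ) : ℤ_[p]) = (1 + p) ^ K - 1 := by
    rw [Nat.cast_sub (Nat.one_le_pow _ _ (Nat.succ_pos p))]
    push_cast
    ring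
  have h := associated_pow_valuation (x := (((p + 1) ^ K - 1 : ℕ) : ℤ_[p]))
    (Nat.cast_ne_zero.mpr hN)
  rw [valuation_natCast, padicValNat_add_one_pow_sub_one hp hK, hcast] at h
  rw [← neg_sub]
  exact h.symm.neg_left

theorem associated_one_sub_zpow (hp : Odd p) (u : ℤ_[p]ˣ) (hu : (u : ℤ_[p]) = 1 + p)
    {k : ℤ} (hk : k ≠ 0) :
    Associated (1 - (↑(u ^ k) : ℤ_[p])) ((p : ℤ_[p]) ^ (padicValInt p k + 1)) := by
  have h := associated_one_sub_one_add_pow hp (Int.natAbs_ne_zero.mpr hk)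
  rw [← hu, ← Units.val_pow_eq_pow_val] at h
  obtain ⟨K, rfl | rfl⟩ := Int.eq_nat_or_neg k
  · rwa [zpow_natCast]
  · rw [Int.natAbs_neg, Int.natAbs_natCast] at h
    rw [zpow_neg, zpow_natCast, padicValInt, Int.natAbs_neg, Int.natAbs_natCast]
    exact (associated_one_sub_inv _).trans h

theorem isUnit_one_sub_zpow (u : ℤ_[p]ˣ) {k : ℤ}
    (hk : ¬ (orderOf (toZMod (u : ℤ_[p])) : ℤ) ∣ k) : IsUnit (1 - (↑(u ^ k) : ℤ_[p])) := by
  contrapose! hk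
  have h : toZMod (1 - (↑(u ^ k) : ℤ_[p])) = 0 := by
    rw [← RingHom.mem_ker, ker_toZMod]
    exact hk
  rw [map_sub, map_one, sub_eq_zero] at h
  let v : (ZMod p)ˣ := Units.map (toZMod : ℤ_[p] →+* ZMod p).toMonoidHom u
  change ((orderOf (v : ZMod p) : ℕ) : ℤ) ∣ k
  rw [orderOf_units, orderOf_dvd_iff_zpow_eq_one]
  ext
  rw [← map_zpow]
  exact h.symm

noncomputable def quotientSpanPowEquiv (n : ℕ) :
    ℤ_[p] ⧸ Ideal.span {(p : ℤ_[p]) ^ n} ≃+* ZMod (p ^ n) :=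
  (Ideal.quotEquivOfEq (ker_toZModPow n).symm).trans
    (RingHom.quotientKerEquivOfSurjective (ZMod.ringHom_surjective (toZModPow n)))

end PadicInt

theorem stmt_7_general (p : ℕ) [Fact p.Prime] (hodd : p ≠ 2)
    (ζ : (PadicInt p)ˣ) (hζ : ζ ^ (p - 1) = 1)
    (hgen : orderOf (PadicInt.toZMod (ζ : PadicInt p)) = p - 1)
    (g : (PadicInt p)ˣ) (hg : (g : PadicInt p) = (ζ : PadicInt p) * (1 + (p : PadicInt p)))
    (k : ℤ) :
    (∀ (n : ℕ) (m : ℤ), k = ((p : ℤ) - 1) * (p : ℤ) ^ n * m → ¬ ((p : ℤ) ∣ m) →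
      Function.Injective (fun x : PadicInt p => (1 - (↑(g ^ k) : PadicInt p)) * x) ∧
      Nonempty ((PadicInt p ⧸ Ideal.span {1 - (↑(g ^ k) : PadicInt p)}) ≃+
        ZMod (p ^ (n + 1)))) ∧
    (¬ ((p : ℤ) - 1 ∣ k) →
      Function.Bijective (fun x : PadicInt p => (1 - (↑(g ^ k) : PadicInt p)) * x)) := by
  have hp := (Fact.out : p.Prime)
  have hp1 : ((p - 1 : ℕ) : ℤ) = p - 1 := Nat.cast_pred hp.pos
  refine ⟨fun n m hkm hm => ?_, fun hk => ?_⟩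
  · set u := ζ⁻¹ * g
    have hu : (u : ℤ_[p]) = 1 + p := by simp [u, hg]
    have hv : padicValInt p k = n := by rw [hkm]; exact padicValInt_sub_one_mul_pow_mul n hm
    have hζk : ζ ^ k = 1 := orderOf_dvd_iff_zpow_eq_one.mp <|
      (Int.natCast_dvd_natCast.mpr (orderOf_dvd_of_pow_eq_one hζ)).trans
        (hp1 ▸ hkm ▸ (dvd_mul_right _ _).mul_right m)
    have hgk : g ^ k = u ^ k := by rw [mul_zpow, inv_zpow, hζk, inv_one, one_mul]
    have hk0 : k ≠ 0 := by
      have := hp.two_le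
      rw [hkm]
      exact mul_ne_zero (mul_ne_zero (by omega) (pow_ne_zero _ (by omega)))
        (by rintro rfl; exact hm (dvd_zero _))
    have hassoc := PadicInt.associated_one_sub_zpow (hp.odd_of_ne_two hodd) u hu hk0
    rw [← hgk, hv] at hassoc
    have hp0 : (p : ℤ_[p]) ^ (n + 1) ≠ 0 := pow_ne_zero _ (NeZero.ne _)
    refine ⟨mul_right_injective₀ (hassoc.ne_zero_iff.mpr hp0), ⟨?_⟩⟩
    exact ((Ideal.quotEquivOfEq (Ideal.span_singleton_eq_span_singleton.mpr hassoc)).trans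
      (PadicInt.quotientSpanPowEquiv (n + 1))).toAddEquiv
  · have hgζ : PadicInt.toZMod (g : ℤ_[p]) = PadicInt.toZMod (ζ : ℤ_[p]) := by
      rw [hg, map_mul, map_add, map_one, map_natCast, ZMod.natCast_self, add_zero, mul_one]
    exact IsUnit.isUnit_iff_mulLeft_bijective.mp
      (PadicInt.isUnit_one_sub_zpow g (by rwa [hgζ, hgen, hp1]))

/-- Let `p` be an odd prime, `ζ ∈ ℤ_p^×` a `(p−1)`-st root of unity whose reduction mod `p`
generates `(ℤ/p)^×`, and `g = ζ(1+p)`.  For a nonzero integer `k` written as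
`k = (p−1)p^n m` with `p ∤ m`, the map `x ↦ (1 − g^k)x` on `ℤ_p` is injective with cokernel
isomorphic to `ℤ/p^{n+1}`; and if `(p−1) ∤ k`, this map is bijective. -/
theorem stmt_7 (p : ℕ) [Fact p.Prime] (hodd : p ≠ 2)
    (ζ : (PadicInt p)ˣ) (hζ : ζ ^ (p - 1) = 1)
    (hgen : orderOf (PadicInt.toZMod (ζ : PadicInt p)) = p - 1)
    (g : (PadicInt p)ˣ) (hg : (g : PadicInt p) = (ζ : PadicInt p) * (1 + (p : PadicInt p)))
    (k : ℤ) (hk : k ≠ 0) :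
    (∀ (n : ℕ) (m : ℤ), k = ((p : ℤ) - 1) * (p : ℤ) ^ n * m → ¬ ((p : ℤ) ∣ m) →
      Function.Injective (fun x : PadicInt p => (1 - (↑(g ^ k) : PadicInt p)) * x) ∧
      Nonempty ((PadicInt p ⧸ Ideal.span {1 - (↑(g ^ k) : PadicInt p)}) ≃+
        ZMod (p ^ (n + 1)))) ∧
    (¬ ((p : ℤ) - 1 ∣ k) →
      Function.Bijective (fun x : PadicInt p => (1 - (↑(g ^ k) : PadicInt p)) * x)) :=
  stmt_7_general p hodd ζ hζ hgen g hg k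
end
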